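/- For every dimension d ≥ 1, the image of the map σ̄ ↦ p^succ_{0,d}(σ̄) on (0, ∞) is exactly the open interval (0, 1/2); in particular, lim_{σ̄ → 0+} p^succ_{0,d}(σ̄) = 1/2 and lim_{σ̄ → ∞} p^succ_{0,d}(σ̄) = 0, and σ̄ ↦ p^succ_{0,d}(σ̄) is a bijection from (0,∞) onto (0, 1/2). -/

import Mathlib

open MeasureTheory ProbabilityTheory Real Set Filter
open scoped ENNReal

/-- The standard Gaussian measure `N(0, I_d)` on `ℝ^d`. -/
noncomputable def stdGaussian (d : ℕ) : Measure (EuclideanSpace ℝ (Fin d)) :=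
  (Measure.pi (fun _ : Fin d => gaussianReal 0 1)).map
    (EuclideanSpace.equiv (Fin d) ℝ).symm

/-- The Gaussian measure `N(m, σ² I_d)` on `ℝ^d`. -/
noncomputable def gaussianVec (d : ℕ) (m : EuclideanSpace ℝ (Fin d)) (σ : ℝ) :
    Measure (EuclideanSpace ℝ (Fin d)) :=
  (stdGaussian d).map (fun z => m + σ • z)

/-- The first standard basis vector of `ℝ^d` (zero if `d = 0`). -/
noncomputable def e1 (d : ℕ) : EuclideanSpace ℝ (Fin d) :=
  if h : 0 < d then EuclideanSpace.single ⟨0, h⟩ 1 else 0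

/-- The success probability with rate `r` and normalized step size `σb`:
`Pr(‖e₁ + (σb/d)·N‖ < 1 - r)` for `N ∼ N(0, I_d)`. -/
noncomputable def psucc (d : ℕ) (r σb : ℝ) : ℝ :=
  ((stdGaussian d) {z | ‖e1 d + (σb / d) • z‖ < 1 - r}).toReal

/-!
For `c = σ̄ / d > 0`, expanding the square shows `‖e₁ + c • z‖ < 1 ↔ 2 ⟪e₁, z⟫ + c ‖z‖² < 0`.
These regions decrease strictly in `c` (their differences contain nonempty open sets, which have
positive Gaussian measure), shrink to `∅` as `c → ∞`, and at `c = 0` form a half-space of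
measure `1/2` by the symmetry `z ↦ -z`. Their boundaries are spheres or a hyperplane, hence
Lebesgue-null, so dominated convergence makes `c ↦ P(region c)` continuous. A continuous strictly
decreasing function from `1/2` to `0` is a bijection of `(0, ∞)` onto `(0, 1/2)`.
-/

open Topology Metric
open scoped RealInnerProductSpace

namespace MeasureTheory.Measure

theorem AbsolutelyContinuous.pi_fin {n : ℕ} {α : Fin n → Type*} [∀ i, MeasurableSpace (α i)]
    {μ ν : ∀ i, Measure (α i)} [∀ i, SigmaFinite (μ i)] [∀ i, SigmaFinite (ν i)]
    (h : ∀ i, μ i ≪ ν i) : Measure.pi μ ≪ Measure.pi ν := by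
  induction n with
  | zero => rw [pi_of_empty, pi_of_empty]
  | succ n ih =>
    rw [← (measurePreserving_piFinSuccAbove μ 0).symm.map_eq,
      ← (measurePreserving_piFinSuccAbove ν 0).symm.map_eq]
    exact ((h 0).prod (ih fun j => h _)).map (MeasurableEquiv.measurable _)

theorem AbsolutelyContinuous.pi {ι : Type*} [Fintype ι] {α : ι → Type*}
    [∀ i, MeasurableSpace (α i)] {μ ν : ∀ i, Measure (α i)} [∀ i, SigmaFinite (μ i)]
    [∀ i, SigmaFinite (ν i)] (h : ∀ i, μ i ≪ ν i) : Measure.pi μ ≪ Measure.pi ν := by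
  let e := (Fintype.equivFin ι).symm
  rw [← (measurePreserving_piCongrLeft μ e).map_eq, ← (measurePreserving_piCongrLeft ν e).map_eq]
  exact (AbsolutelyContinuous.pi_fin fun i => h (e i)).map (MeasurableEquiv.measurable _)

end MeasureTheory.Measure

section MeasureOfSublevelSet

variable {α : Type*} [MeasurableSpace α] {μ : Measure α}

theorem measureReal_setOf_neg_eq_half [InvolutiveNeg α] [MeasurableNeg α]
    [IsProbabilityMeasure μ] [μ.IsNegInvariant] {f : α → ℝ} (hf : Measurable f)
    (hodd : ∀ x, f (-x) = -f x) (hnull : μ {x | f x = 0} = 0) :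
    μ.real {x | f x < 0} = 1 / 2 := by
  have hpos : μ.real {x | 0 < f x} = μ.real {x | f x < 0} := by
    rw [measureReal_def, measureReal_def, ← Measure.measure_neg]
    congr 2 with x
    simp [hodd]
  have hnonpos : μ.real {x | f x ≤ 0} = μ.real {x | f x < 0} := by
    refine measureReal_congr ?_
    have hsplit : {x | f x ≤ 0} = {x | f x < 0} ∪ {x | f x = 0} := by
      ext x
      simp [le_iff_lt_or_eq]
    rw [hsplit]
    exact union_ae_eq_left_of_ae_eq_empty (ae_eq_empty.mpr hnull)
  have hcompl : {x | f x ≤ 0}ᶜ = {x | 0 < f x} := by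
    ext x
    simp
  have htotal := probReal_compl_eq_one_sub (μ := μ)
    (measurableSet_le hf (measurable_const (a := (0 : ℝ))))
  rw [hcompl, hpos, hnonpos] at htotal
  linarith

theorem continuousAt_measureReal_setOf_neg [IsFiniteMeasure μ] {g : ℝ → α → ℝ}
    (hmeas : ∀ c, Measurable (g c)) (hcont : ∀ x, Continuous (g · x)) {c₀ : ℝ}
    (hnull : μ {x | g c₀ x = 0} = 0) : ContinuousAt (fun c => μ.real {x | g c x < 0}) c₀ := by
  have hlim : ∀ᵐ x ∂μ, ∀ᶠ c in 𝓝 c₀, g c x < 0 ↔ g c₀ x < 0 := by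
    refine (measure_eq_zero_iff_ae_notMem.mp hnull).mono fun x hx => ?_
    rcases lt_or_gt_of_ne hx with hneg | hpos
    · exact ((hcont x).continuousAt.eventually_lt continuousAt_const hneg).mono
        fun c hc => iff_of_true hc hneg
    · exact (continuousAt_const.eventually_lt (hcont x).continuousAt hpos).mono
        fun c hc => iff_of_false (not_lt.mpr hc.le) (not_lt.mpr hpos.le)
  exact (ENNReal.tendsto_toReal (measure_ne_top _ _)).comp
    (tendsto_measure_of_ae_tendsto_indicator_of_isFiniteMeasure _
      (measurableSet_lt (hmeas c₀) measurable_const)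
      (fun c => measurableSet_lt (hmeas c) measurable_const) hlim)

end MeasureOfSublevelSet

theorem StrictAntiOn.bijOn_Ioi_Ioo {α δ : Type*} [ConditionallyCompleteLinearOrder α]
    [TopologicalSpace α] [OrderTopology α] [DenselyOrdered α] [NoMaxOrder α]
    [LinearOrder δ] [TopologicalSpace δ] [OrderClosedTopology δ] {f : α → δ} {a : α} {b : δ}
    (hanti : StrictAntiOn f (Ici a)) (hf : ContinuousOn f (Ici a))
    (htop : Tendsto f atTop (𝓝 b)) : BijOn f (Ioi a) (Ioo b (f a)) := by
  refine ⟨fun x hx => ⟨?_, hanti self_mem_Ici (mem_Ici.2 hx.le) hx⟩,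
    hanti.injOn.mono Ioi_subset_Ici_self, fun y hy => ?_⟩
  · obtain ⟨x', hxx'⟩ := exists_gt x
    have hx' : x' ∈ Ici a := mem_Ici.2 (hx.le.trans hxx'.le)
    have hb : b ≤ f x' := le_of_tendsto htop <| (eventually_ge_atTop x').mono
      fun t ht => hanti.antitoneOn hx' (mem_Ici.2 ((mem_Ici.1 hx').trans ht)) ht
    exact hb.trans_lt (hanti (mem_Ici.2 hx.le) hx' hxx')
  · obtain ⟨T, hfT, haT⟩ := ((htop.eventually_lt_const hy.1).and (eventually_ge_atTop a)).exists
    obtain ⟨x, hx, rfl⟩ := intermediate_value_Ioo' haT (hf.mono Icc_subset_Ici_self) ⟨hfT, hy.2⟩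
    exact ⟨x, hx.1, rfl⟩

section SuccessRegion

variable {E : Type*} [NormedAddCommGroup E] [InnerProductSpace ℝ E]

/-- For `c > 0` and `‖e‖ = 1` this is `{z | ‖e + c • z‖ < 1}` (`norm_add_smul_lt_one_iff`); the
quadratic form extends it to an antitone family over all `c`, a half-space at `c = 0`. -/
def successRegion (e : E) (c : ℝ) : Set E := {z | 2 * ⟪e, z⟫ + c * ‖z‖ ^ 2 < 0}

variable {e : E}

theorem norm_add_smul_lt_one_iff (he : ‖e‖ = 1) {c : ℝ} (hc : 0 < c) (z : E) :
    ‖e + c • z‖ < 1 ↔ z ∈ successRegion e c := by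
  have hsq : ‖e + c • z‖ ^ 2 = 1 + c * (2 * ⟪e, z⟫ + c * ‖z‖ ^ 2) := by
    rw [norm_add_sq_real, he, real_inner_smul_right, norm_smul, Real.norm_eq_abs, mul_pow, sq_abs]
    ring
  rw [← sq_lt_one_iff₀ (norm_nonneg _), hsq, add_lt_iff_neg_left]
  exact ⟨fun h => neg_of_mul_neg_right h hc.le, mul_neg_of_pos_of_neg hc⟩

theorem isOpen_successRegion (e : E) (c : ℝ) : IsOpen (successRegion e c) :=
  isOpen_lt (by fun_prop) continuous_const

theorem successRegion_antitone (e : E) : Antitone (successRegion e) := fun c₁ c₂ h z hz => by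
  simp only [successRegion, mem_ofPred_eq] at hz ⊢
  nlinarith [sq_nonneg ‖z‖]

theorem iInter_successRegion (e : E) : ⋂ c, successRegion e c = ∅ := by
  refine eq_empty_of_forall_notMem fun z hz => ?_
  have h := mem_iInter.mp hz (-2 * ⟪e, z⟫ / ‖z‖ ^ 2)
  rcases eq_or_ne z 0 with rfl | hz0
  · simp [successRegion] at h
  · simp only [successRegion, mem_ofPred_eq] at h
    field_simp at h
    simp at h

theorem setOf_eq_zero_eq_sphere (he : ‖e‖ = 1) {c : ℝ} (hc : c ≠ 0) :
    {z : E | 2 * ⟪e, z⟫ + c * ‖z‖ ^ 2 = 0} = sphere (-c⁻¹ • e) |c|⁻¹ := by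
  ext z
  rw [mem_sphere, dist_eq_norm, neg_smul, sub_neg_eq_add,
    ← sq_eq_sq₀ (norm_nonneg _) (by positivity), norm_add_sq_real, norm_smul,
    real_inner_smul_right, he, inv_pow, sq_abs, mem_ofPred_eq]
  simp only [Real.norm_eq_abs, abs_inv, sq_abs, inv_pow, mul_one, real_inner_comm e z]
  rw [add_eq_right, show ‖z‖ ^ 2 + 2 * (c⁻¹ * ⟪e, z⟫) = c⁻¹ * (2 * ⟪e, z⟫ + c * ‖z‖ ^ 2) by
    field_simp; ring, mul_eq_zero, or_iff_right (inv_ne_zero hc)]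

variable [MeasurableSpace E] [BorelSpace E]

theorem measure_setOf_eq_zero_of_absolutelyContinuous [FiniteDimensional ℝ E] {μ ν : Measure E}
    [ν.IsAddHaarMeasure] (hμ : μ ≪ ν) (he : ‖e‖ = 1) (c : ℝ) :
    μ {z : E | 2 * ⟪e, z⟫ + c * ‖z‖ ^ 2 = 0} = 0 := by
  apply hμ
  rcases eq_or_ne c 0 with rfl | hc
  · have hperp : {z : E | 2 * ⟪e, z⟫ + 0 * ‖z‖ ^ 2 = 0} = ((ℝ ∙ e)ᗮ : Submodule ℝ E) := by
      ext z
      simp [Submodule.mem_orthogonal_singleton_iff_inner_right]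
    rw [hperp]
    refine Measure.addHaar_submodule ν _ fun htop => ?_
    have : ⟪e, e⟫ = 0 := Submodule.mem_orthogonal_singleton_iff_inner_right.mp (htop ▸ trivial)
    simp [he] at this
  · have : Nontrivial E := nontrivial_of_ne e 0 (norm_ne_zero_iff.mp (he ▸ one_ne_zero))
    rw [setOf_eq_zero_eq_sphere he hc]
    exact Measure.addHaar_sphere ν _ _

theorem continuous_measureReal_successRegion [FiniteDimensional ℝ E] (μ : Measure E)
    [IsFiniteMeasure μ] {ν : Measure E} [ν.IsAddHaarMeasure] (hμ : μ ≪ ν) (he : ‖e‖ = 1) :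
    Continuous fun c => μ.real (successRegion e c) :=
  continuous_iff_continuousAt.2 fun c => continuousAt_measureReal_setOf_neg
    (fun _ => by fun_prop) (fun _ => by fun_prop)
    (measure_setOf_eq_zero_of_absolutelyContinuous hμ he c)

theorem tendsto_measureReal_successRegion_atTop (μ : Measure E) [IsFiniteMeasure μ] (e : E) :
    Tendsto (fun c => μ.real (successRegion e c)) atTop (𝓝 0) := by
  have h := tendsto_measure_iInter_atTop (μ := μ)
    (fun c => (isOpen_successRegion e c).measurableSet.nullMeasurableSet)
    (successRegion_antitone e) ⟨0, measure_ne_top _ _⟩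
  rw [iInter_successRegion, measure_empty] at h
  exact (ENNReal.tendsto_toReal ENNReal.zero_ne_top).comp h

theorem strictAntiOn_measureReal_successRegion (μ : Measure E) [IsFiniteMeasure μ]
    [μ.IsOpenPosMeasure] (he : ‖e‖ = 1) :
    StrictAntiOn (fun c => μ.real (successRegion e c)) (Ici 0) := by
  intro c₁ hc₁ c₂ _ h12
  set m := (c₁ + c₂) / 2 with hm_def
  have hm : 0 < m := by
    rw [mem_Ici] at hc₁
    linarith
  -- `t • e` with `t = -2 / m` lies in the region for `c₁ < m` but not for `c₂ > m`
  have hvalue : ∀ c, 2 * ⟪e, (-2 / m) • e⟫ + c * ‖(-2 / m) • e‖ ^ 2 = -4 * (m - c) / m ^ 2 := by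
    intro c
    rw [real_inner_smul_right, real_inner_self_eq_norm_sq, norm_smul, he, Real.norm_eq_abs,
      mul_pow, sq_abs]
    field_simp
    ring
  set U := successRegion e c₁ ∩ {z | 0 < 2 * ⟪e, z⟫ + c₂ * ‖z‖ ^ 2}
  have hU_open : IsOpen U :=
    (isOpen_successRegion e c₁).inter (isOpen_lt continuous_const (by fun_prop))
  have hU_ne : U.Nonempty := by
    refine ⟨(-2 / m) • e, ?_, ?_⟩ <;> simp only [successRegion, mem_ofPred_eq, hvalue]
    · exact div_neg_of_neg_of_pos (by linarith) (by positivity)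
    · exact div_pos (by linarith) (by positivity)
  have hU_sub : U ⊆ successRegion e c₁ \ successRegion e c₂ :=
    fun z hz => ⟨hz.1, fun h => lt_asymm (show _ < (0 : ℝ) from h) hz.2⟩
  have hU_pos : 0 < μ.real U :=
    ENNReal.toReal_pos (hU_open.measure_pos μ hU_ne).ne' (measure_ne_top _ _)
  have hdiff := measureReal_sdiff (μ := μ) (successRegion_antitone e h12.le)
    (isOpen_successRegion e c₂).measurableSet
  have hU_le := measureReal_mono (μ := μ) hU_sub
  show μ.real _ < μ.real _
  linarith

end SuccessRegion

namespace ProbabilityTheory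

section EuclideanSpace

variable {ι : Type*} [Fintype ι]

theorem stdGaussian_euclideanSpace_absolutelyContinuous :
    stdGaussian (EuclideanSpace ℝ ι) ≪ volume := by
  rw [← map_pi_eq_stdGaussian, ← (PiLp.volume_preserving_toLp ι).map_eq, volume_pi]
  exact (Measure.AbsolutelyContinuous.pi fun _ =>
    gaussianReal_absolutelyContinuous 0 one_ne_zero).map (by fun_prop)

theorem volume_absolutelyContinuous_stdGaussian_euclideanSpace :
    volume ≪ stdGaussian (EuclideanSpace ℝ ι) := by
  rw [← map_pi_eq_stdGaussian, ← (PiLp.volume_preserving_toLp ι).map_eq, volume_pi]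
  exact (Measure.AbsolutelyContinuous.pi fun _ =>
    gaussianReal_absolutelyContinuous' 0 one_ne_zero).map (by fun_prop)

instance : (stdGaussian (EuclideanSpace ℝ ι)).IsOpenPosMeasure :=
  volume_absolutelyContinuous_stdGaussian_euclideanSpace.isOpenPosMeasure

end EuclideanSpace

instance {E : Type*} [NormedAddCommGroup E] [InnerProductSpace ℝ E] [FiniteDimensional ℝ E]
    [MeasurableSpace E] [BorelSpace E] : (stdGaussian E).IsNegInvariant :=
  ⟨stdGaussian_map (LinearIsometryEquiv.neg ℝ)⟩

theorem stdGaussian_measureReal_successRegion_zero {ι : Type*} [Fintype ι]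
    {e : EuclideanSpace ℝ ι} (he : ‖e‖ = 1) :
    (stdGaussian (EuclideanSpace ℝ ι)).real (successRegion e 0) = 1 / 2 :=
  measureReal_setOf_neg_eq_half (by fun_prop) (fun z => by simp [inner_neg_right])
    (measure_setOf_eq_zero_of_absolutelyContinuous
      stdGaussian_euclideanSpace_absolutelyContinuous he 0)

end ProbabilityTheory

theorem stdGaussian_eq (d : ℕ) :
    stdGaussian d = ProbabilityTheory.stdGaussian (EuclideanSpace ℝ (Fin d)) :=
  map_pi_eq_stdGaussian

theorem norm_e1 {d : ℕ} (hd : 0 < d) : ‖e1 d‖ = 1 := by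
  simp [e1, hd]

theorem psucc_zero_eq {d : ℕ} (hd : 0 < d) {σb : ℝ} (hσb : 0 < σb) :
    psucc d 0 σb =
      (ProbabilityTheory.stdGaussian (EuclideanSpace ℝ (Fin d))).real
        (successRegion (e1 d) (σb / d)) := by
  rw [psucc, stdGaussian_eq, measureReal_def, sub_zero]
  congr 2 with z
  exact norm_add_smul_lt_one_iff (norm_e1 hd) (by positivity) z

/-- For `d ≥ 1`, the image of `σ̄ ↦ p^succ_{0,d}(σ̄)` on `(0,∞)` is exactly `(0, 1/2)`;
in particular the limits at `0+` and `∞` are `1/2` and `0`, and the map is a bijection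
from `(0,∞)` onto `(0, 1/2)`. -/
theorem psucc_image (d : ℕ) (hd : 1 ≤ d) :
    (psucc d 0) '' (Set.Ioi 0) = Set.Ioo 0 (1/2) ∧
    Filter.Tendsto (psucc d 0) (nhdsWithin 0 (Set.Ioi 0)) (nhds (1/2)) ∧
    Filter.Tendsto (psucc d 0) Filter.atTop (nhds 0) ∧
    Set.BijOn (psucc d 0) (Set.Ioi 0) (Set.Ioo 0 (1/2)) := by
  have he : ‖e1 d‖ = 1 := norm_e1 hd
  have hd' : (0 : ℝ) < d := by exact_mod_cast hd
  set μ := ProbabilityTheory.stdGaussian (EuclideanSpace ℝ (Fin d))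
  set G : ℝ → ℝ := fun σb => μ.real (successRegion (e1 d) (σb / d))
  have hpsucc : EqOn (psucc d 0) G (Ioi 0) := fun σb hσb => psucc_zero_eq hd hσb
  have hcont : Continuous G :=
    (continuous_measureReal_successRegion μ
      ProbabilityTheory.stdGaussian_euclideanSpace_absolutelyContinuous he).comp
      (continuous_id.div_const _)
  have hG0 : G 0 = 1 / 2 := by
    simpa only [G, zero_div] using ProbabilityTheory.stdGaussian_measureReal_successRegion_zero he
  have hanti : StrictAntiOn G (Ici 0) :=
    (strictAntiOn_measureReal_successRegion μ he).comp_strictMonoOn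
      ((strictMono_id.div_const hd').strictMonoOn _) fun σb hσb => div_nonneg hσb hd'.le
  have htop : Tendsto G atTop (𝓝 0) :=
    (tendsto_measureReal_successRegion_atTop μ _).comp (tendsto_id.atTop_div_const hd')
  have hbij : BijOn (psucc d 0) (Ioi 0) (Ioo 0 (1 / 2)) :=
    hG0 ▸ (hanti.bijOn_Ioi_Ioo hcont.continuousOn htop).congr hpsucc.symm
  refine ⟨hbij.image_eq, ?_, htop.congr' ?_, hbij⟩
  · exact hG0 ▸ ((hcont.tendsto 0).mono_left nhdsWithin_le_nhds).congr'
      hpsucc.eventuallyEq_nhdsWithin.symm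
  · filter_upwards [eventually_gt_atTop 0] with σb hσb using (hpsucc hσb).symm
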